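/- Define the Hamilton numbers by H_n = ℓ_{n-1} - 1 for n ≥ 1, where ℓ_0 = 3 and ℓ_{n+1} = 1 + Σ_{j=0}^{n} (-1)^j * binom(ℓ_{n-j}, j+2). Then H_1 = 2 and for all n ≥ 1, H_{n+1} = 2 + Σ_{j=0}^{n-1} (-1)^j * binom(H_{n-j}, j+2). -/

import Mathlib

/-!
Write `G n = ℓ n - 1` and `S n = ∑_{j ≤ n} (-1)^j binom(G (n-j), j+2)`. Pascal's rule
`binom(G + 1, j + 2) = binom(G, j + 1) + binom(G, j + 2)` splits the sum defining `ℓ (n+2)` into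
two alternating sums; the second is `S (n+1)` and the first is `G (n+1) - S n`, so
`G (n+1) = 2 + S n` propagates to `G (n+2) = 2 + S (n+1)`.

The catch is that `toNat` truncates, so this needs `G n ≥ 0`. That comes from the growth bound
`G n (G n + 1) ≤ 3 G (n+1)`: it makes `binom(G (k-1), j+3) ≤ binom(G k, j+2)`, so the terms of
`S n` decrease, hence `S n ≥ 0` and `S (n+1) ≥ binom(G (n+1), 2) - binom(G n, 3)`, which in turn
gives the growth bound at the next index.
-/

open Finset

section AlternatingSum

variable {R : Type*} [Ring R]

theorem alternating_sum_range_succ (c : ℕ → R) (n : ℕ) :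
    ∑ j ∈ range (n + 1), (-1) ^ j * c j = c 0 - ∑ j ∈ range n, (-1) ^ j * c (j + 1) := by
  simp [sum_range_succ', pow_succ, sub_eq_neg_add]

variable [PartialOrder R] [IsOrderedAddMonoid R]

theorem alternating_sum_nonneg_and_le (c : ℕ → R) (n : ℕ) (hanti : ∀ j < n, c (j + 1) ≤ c j)
    (hlast : 0 ≤ c n) :
    0 ≤ ∑ j ∈ range (n + 1), (-1) ^ j * c j ∧ ∑ j ∈ range (n + 1), (-1) ^ j * c j ≤ c 0 := by
  induction n generalizing c with
  | zero => simpa using hlast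
  | succ n ih =>
    obtain ⟨htail_nonneg, htail_le⟩ :=
      ih (fun j => c (j + 1)) (fun j hj => hanti (j + 1) (by omega)) hlast
    rw [alternating_sum_range_succ]
    exact ⟨sub_nonneg.2 (htail_le.trans (hanti 0 (by omega))), sub_le_self _ htail_nonneg⟩

theorem sub_le_alternating_sum (c : ℕ → R) (n : ℕ) (hanti : ∀ j < n + 1, c (j + 1) ≤ c j)
    (hlast : 0 ≤ c (n + 1)) :
    c 0 - c 1 ≤ ∑ j ∈ range (n + 2), (-1) ^ j * c j := by
  rw [alternating_sum_range_succ]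
  exact sub_le_sub_left
    (alternating_sum_nonneg_and_le (fun j => c (j + 1)) n (fun j hj => hanti (j + 1) (by omega))
      hlast).2 _

end AlternatingSum

namespace Nat

theorem choose_add_two_le_choose_add_one {a b k : ℕ} (hba : b ≤ a)
    (h : b.choose (k + 1) ≤ a.choose k) : b.choose (k + 2) ≤ a.choose (k + 1) := by
  have hb := choose_succ_right_eq b (k + 1)
  have ha := choose_succ_right_eq a k
  have hsub : b - (k + 1) ≤ a - k := by omega
  refine le_of_mul_le_mul_right (a := (k + 1) * (k + 2)) ?_ (by positivity)
  calc b.choose (k + 2) * ((k + 1) * (k + 2))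
      = (k + 1) * (b.choose (k + 1) * (b - (k + 1))) := by rw [← hb]; ring
    _ ≤ (k + 2) * (a.choose k * (a - k)) := by gcongr; omega
    _ = a.choose (k + 1) * ((k + 1) * (k + 2)) := by rw [← ha]; ring

theorem mul_succ_add_three_mul_choose_three_le {a b : ℕ} (h : b * (b + 1) ≤ 3 * a) :
    a * (a + 1) + 3 * b.choose 3 ≤ 3 * (a.choose 2 + 2) := by
  have hb : (6 * b.choose 3 : ℤ) = b * (b - 1) * (b - 2) := by
    have h := descPochhammer_eval_eq_descFactorial ℤ b 3
    rw [descFactorial_eq_factorial_mul_choose] at h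
    simp [descPochhammer_succ_right, factorial] at h
    linarith
  have ha : (2 * a.choose 2 : ℤ) = a * (a - 1) := by
    have h := cast_descFactorial_two ℤ a
    rwa [descFactorial_eq_factorial_mul_choose, factorial_two, cast_mul] at h
  zify
  suffices (b * (b - 1) * (b - 2) : ℤ) ≤ a ^ 2 - 5 * a + 12 by linarith
  obtain hb3 | rfl | hb5 : b ≤ 3 ∨ b = 4 ∨ 5 ≤ b := by omega
  · interval_cases b <;> norm_num at h ⊢ <;> nlinarith
  · -- the real relaxation fails here; integrality gives `a ≥ 7` instead of `a ≥ 20 / 3`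
    have ha7 : (7 : ℤ) ≤ a := by omega
    norm_num
    nlinarith
  · zify at h hb5
    have hc : (0 : ℤ) ≤ 3 * a + b * (b + 1) - 15 := by nlinarith
    have hp : (0 : ℤ) ≤ (b - 5) * (b ^ 2 * (b - 2) + 3 * b - 18) := by
      apply mul_nonneg <;> nlinarith
    nlinarith [mul_nonneg (sub_nonneg.2 h) hc]

theorem choose_three_le_choose_two {a b : ℕ} (h : b * (b + 1) ≤ 3 * a) :
    b.choose 3 ≤ a.choose 2 := by
  have := mul_succ_add_three_mul_choose_three_le h
  rcases le_or_gt 2 a with ha | ha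
  · nlinarith
  · have : b < 3 := by nlinarith
    simp [choose_eq_zero_of_lt this]

theorem choose_succ_le_choose {a b k : ℕ} (h : b * (b + 1) ≤ 3 * a) (hk : 2 ≤ k) :
    b.choose (k + 1) ≤ a.choose k := by
  have hba : b ≤ a := by nlinarith
  induction k, hk using le_induction with
  | base => exact choose_three_le_choose_two h
  | succ k _ ih => exact choose_add_two_le_choose_add_one hba ih

end Nat

-- Pascal's rule survives the truncation: for `x ≤ 0` both sides vanish.
theorem Int.toNat_choose_add_two (x : ℤ) (k : ℕ) :
    x.toNat.choose (k + 2) = (x - 1).toNat.choose (k + 1) + (x - 1).toNat.choose (k + 2) := by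
  rcases le_or_gt 1 x with hx | hx
  · rw [show x.toNat = (x - 1).toNat + 1 by omega, Nat.choose_succ_succ']
  · simp [show x.toNat = 0 by omega, show (x - 1).toNat = 0 by omega]

def hamiltonSum (g : ℕ → ℕ) (n : ℕ) : ℤ :=
  ∑ j ∈ range (n + 1), (-1) ^ j * ((g (n - j)).choose (j + 2) : ℤ)

theorem hamiltonSum_toNat_succ (f : ℕ → ℤ) (n : ℕ) :
    hamiltonSum (fun k => (f k).toNat) (n + 1) =
      (f (n + 1) - 1).toNat - hamiltonSum (fun k => (f k - 1).toNat) n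
        + hamiltonSum (fun k => (f k - 1).toNat) (n + 1) := by
  have hsplit : hamiltonSum (fun k => (f k).toNat) (n + 1) =
      ∑ j ∈ range (n + 2), (-1) ^ j * ((f (n + 1 - j) - 1).toNat.choose (j + 1) : ℤ)
        + hamiltonSum (fun k => (f k - 1).toNat) (n + 1) := by
    rw [hamiltonSum, hamiltonSum, ← sum_add_distrib]
    refine sum_congr rfl fun j _ => ?_
    rw [Int.toNat_choose_add_two]
    push_cast
    ring
  rw [hsplit, alternating_sum_range_succ]
  simp [hamiltonSum]

section Growth

variable {g : ℕ → ℕ}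

theorem hamiltonSum_terms_antitone {n : ℕ} (hg : ∀ k < n, g k * (g k + 1) ≤ 3 * g (k + 1)) :
    ∀ j < n, ((g (n - (j + 1))).choose (j + 1 + 2) : ℤ) ≤ (g (n - j)).choose (j + 2) := by
  intro j hj
  have hstep := hg (n - (j + 1)) (by omega)
  rw [show n - (j + 1) + 1 = n - j by omega] at hstep
  exact_mod_cast Nat.choose_succ_le_choose hstep (by omega)

theorem hamiltonSum_nonneg {n : ℕ} (hg : ∀ k < n, g k * (g k + 1) ≤ 3 * g (k + 1)) :
    0 ≤ hamiltonSum g n :=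
  (alternating_sum_nonneg_and_le _ n (hamiltonSum_terms_antitone hg) (by positivity)).1

theorem choose_sub_choose_le_hamiltonSum {n : ℕ}
    (hg : ∀ k < n + 1, g k * (g k + 1) ≤ 3 * g (k + 1)) :
    ((g (n + 1)).choose 2 - (g n).choose 3 : ℤ) ≤ hamiltonSum g (n + 1) := by
  have := sub_le_alternating_sum (fun j => ((g (n + 1 - j)).choose (j + 2) : ℤ)) n
    (hamiltonSum_terms_antitone hg) (by positivity)
  simpa [hamiltonSum] using this

theorem mul_succ_le_three_mul_two_add_hamiltonSum {n : ℕ}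
    (hg : ∀ k < n, g k * (g k + 1) ≤ 3 * g (k + 1)) :
    (g n * (g n + 1) : ℤ) ≤ 3 * (2 + hamiltonSum g n) := by
  cases n with
  | zero =>
    have := Nat.mul_succ_add_three_mul_choose_three_le (a := g 0) (b := 0) (by simp)
    simp [hamiltonSum]
    linarith
  | succ m =>
    have hpoly := Nat.mul_succ_add_three_mul_choose_three_le (hg m (by omega))
    have hlow := choose_sub_choose_le_hamiltonSum (n := m) hg
    zify at hpoly
    linarith

theorem mul_succ_le_three_mul_of_toNat_eq {n : ℕ}
    (hrec : ∀ k < n, g (k + 1) = (2 + hamiltonSum g k).toNat) :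
    ∀ k < n, g k * (g k + 1) ≤ 3 * g (k + 1) := by
  induction n with
  | zero => simp
  | succ n ih =>
    have hprev := ih (fun k hk => hrec k (by omega))
    intro k hk
    rcases Nat.lt_succ_iff_lt_or_eq.1 hk with hk | rfl
    · exact hprev k hk
    · have := mul_succ_le_three_mul_two_add_hamiltonSum hprev
      have hnn := hamiltonSum_nonneg hprev
      zify
      rw [hrec k hk, Int.toNat_of_nonneg (by linarith)]
      exact this

end Growth

theorem sub_one_eq_two_add_hamiltonSum (ℓ : ℕ → ℤ) (h0 : ℓ 0 = 3)
    (hrec : ∀ n, ℓ (n + 1) = 1 + hamiltonSum (fun k => (ℓ k).toNat) n) (n : ℕ) :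
    ℓ (n + 1) - 1 = 2 + hamiltonSum (fun k => (ℓ k - 1).toNat) n := by
  induction n using Nat.strong_induction_on with
  | _ n ih =>
    cases n with
    | zero => simp [hrec 0, hamiltonSum, h0]
    | succ m =>
      have hgrowth := mul_succ_le_three_mul_of_toNat_eq (n := m)
        (g := fun k => (ℓ k - 1).toNat) fun k hk => congrArg Int.toNat (ih k (by omega))
      have hlast :
          ((ℓ (m + 1) - 1).toNat : ℤ) = 2 + hamiltonSum (fun k => (ℓ k - 1).toNat) m := by
        rw [ih m (by omega), Int.toNat_of_nonneg (by linarith [hamiltonSum_nonneg hgrowth])]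
      rw [hrec, hamiltonSum_toNat_succ, hlast]
      ring

theorem hamilton_recursion (ℓ : ℕ → ℤ) (h0 : ℓ 0 = 3)
    (hrec : ∀ n : ℕ, ℓ (n + 1) =
      1 + ∑ j ∈ Finset.range (n + 1), (-1) ^ j * ((ℓ (n - j)).toNat.choose (j + 2) : ℤ)) (H : ℕ → ℤ) (hH : ∀ n : ℕ, 1 ≤ n → H n = ℓ (n - 1) - 1) :
    H 1 = 2 ∧ ∀ n : ℕ, 1 ≤ n →
      H (n + 1) = 2 + ∑ j ∈ Finset.range n,
        (-1) ^ j * (((H (n - j)).toNat.choose (j + 2) : ℤ)) := by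
  refine ⟨by simp [hH 1 le_rfl, h0], fun n hn => ?_⟩
  obtain ⟨m, rfl⟩ := Nat.exists_eq_add_of_le' hn
  rw [hH (m + 1 + 1) (by omega), Nat.add_sub_cancel, sub_one_eq_two_add_hamiltonSum ℓ h0 hrec]
  congr 1
  refine sum_congr rfl fun j hj => ?_
  rw [hH (m + 1 - j) (by simp at hj; omega), show m + 1 - j - 1 = m - j by omega]
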